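/- Let n ≥ 2 and m ≥ 2 be integers and let p ∈ (0,1). Then Pr[Y*_{n,m−1} > p and X_{(1),n} < p and W_{2,n} < p] · Pr[X_{(1),n} < p] ≤ Pr[Y*_{n,m−1} > p and X_{(1),n} < p] · Pr[X_{(1),n} < p and W_{2,n} < p]; equivalently, Pr[Y*_{n,m−1} > p | X_{(1),n} < p and W_{2,n} < p] ≤ Pr[Y*_{n,m−1} > p | X_{(1),n} < p]. -/

import Mathlib

open MeasureTheory Set

/-- The uniform distribution on `[0,1]`. -/
noncomputable def unif : Measure ℝ := volume.restrict (Set.Icc 0 1)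

instance : IsProbabilityMeasure unif := by
  constructor
  simp [unif, Real.volume_Icc]

/-- The `k`-th largest entry (1-indexed) of a tuple `x : Fin n → ℝ`. -/
noncomputable def kthLargest {n : ℕ} (x : Fin n → ℝ) (k : ℕ) : ℝ :=
  if h : n - k < n then x (Tuple.sort x ⟨n - k, h⟩) else 0

/-- Given the `n` draws `x` and an independent uniform `u ∈ [0,1]`, this is the random
variable `W_{2,n}` which, conditioned on `x`, is uniform on `[X_{(2),n}, 1]`. -/
noncomputable def Wvar {n : ℕ} (ℓ : ℕ) (x : Fin n → ℝ) (u : ℝ) : ℝ :=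
  kthLargest x ℓ + u * (1 - kthLargest x ℓ)

open Classical in
/-- Using an auxiliary uniform `v ∈ [0,1]` as randomness, pick (uniformly at random when `v`
is uniform) the value `y j` for an index `j` in the set `{j | t < y j}`.  Returns `0` if
that set is empty. -/
noncomputable def pickedY {k : ℕ} (y : Fin k → ℝ) (t v : ℝ) : ℝ :=
  let S : Finset (Fin k) := Finset.univ.filter (fun j => t < y j)
  ((S.sort (· ≤ ·)).map y).getD (min (Int.toNat ⌊v * S.card⌋) (S.card - 1)) 0

open Classical in
/-- The random variable `Y*_{n,m-1}`: it equals `0` if `Y_j < X_{(1),n}` for all `j`, and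
otherwise equals `Y_J` where `J` is uniform on `{j | Y_j > X_{(1),n}}` (chosen using the
auxiliary independent uniform `v`). -/
noncomputable def Ystar {n k : ℕ} (x : Fin n → ℝ) (y : Fin k → ℝ) (v : ℝ) : ℝ :=
  if ∀ j, y j < kthLargest x 1 then 0 else pickedY y (kthLargest x 1) v

/-- The sample space: `n` i.i.d. uniforms `X`, the auxiliary uniform for `W_{2,n}`,
`m-1` i.i.d. uniforms `Y`, and the auxiliary uniform used to choose `J`, all independent. -/
noncomputable def P₁₂ (n m : ℕ) : Measure ((Fin n → ℝ) × ℝ × (Fin (m - 1) → ℝ) × ℝ) :=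
  (Measure.pi fun _ : Fin n => unif).prod
    (unif.prod ((Measure.pi fun _ : Fin (m - 1) => unif).prod unif))


/-!
Given the sample `X`, the events `{W_{2,n} < p}` and `{Y* > p}` are independent. On
`{X_{(1),n} < p}` their conditional probabilities are `G = (p - s) / (1 - s)` at `s = X_{(2),n}`
and `F = (1 - p) (1 + t + ⋯ + t^{m-2})` at `t = X_{(1),n}`: each `Y_j` exceeds `t` independently
with probability `1 - t` and the chosen one is uniform on `(t, 1]`, so
`F = (1 - p) (1 - t^{m-1}) / (1 - t)`. Since `{X_{(1),n} < p} = [0, p)^n`, all four probabilities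
are integrals against a product measure on `ℝ^n`, and the claim becomes
`E[F G] E[1] ≤ E[F] E[G]`. As `F` is coordinatewise increasing and `G` decreasing, this is Harris'
inequality for product measures, proved by induction on the dimension from Chebyshev's integral
inequality on a line.
-/

lemma Measurable.integrable_of_norm_le {β : Type*} [MeasurableSpace β] {μ : Measure β}
    [IsFiniteMeasure μ] {f : β → ℝ} {C : ℝ} (hf : Measurable f) (hC : ∀ x, ‖f x‖ ≤ C) :
    Integrable f μ :=
  .of_bound hf.aestronglyMeasurable C (ae_of_all _ hC)

section PiFinSucc

variable {α : Type*} [MeasurableSpace α] {N : ℕ}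

lemma measurable_fin_cons :
    Measurable fun q : α × (Fin N → α) => (Fin.cons q.1 q.2 : Fin (N + 1) → α) := by
  refine measurable_pi_iff.mpr fun j => ?_
  cases j using Fin.cases <;> simp only [Fin.cons_zero, Fin.cons_succ] <;> fun_prop

lemma integral_pi_fin_succ (μ : Fin (N + 1) → Measure α) [∀ i, SigmaFinite (μ i)]
    (H : (Fin (N + 1) → α) → ℝ) :
    ∫ x, H x ∂Measure.pi μ =
      ∫ q, H (Fin.cons q.1 q.2) ∂((μ 0).prod (Measure.pi fun i : Fin N => μ i.succ)) := by
  rw [← ((measurePreserving_piFinSuccAbove μ 0).symm).integral_comp']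
  simp_rw [MeasurableEquiv.piFinSuccAbove_symm_apply, Fin.insertNthEquiv, Fin.insertNth_zero',
    Equiv.coe_fn_mk]
  rfl

lemma measureReal_pi_univ_fin_succ (μ : Fin (N + 1) → Measure α) [∀ i, IsFiniteMeasure (μ i)] :
    (Measure.pi μ).real univ =
      (μ 0).real univ * (Measure.pi fun i : Fin N => μ i.succ).real univ := by
  simp [measureReal_def, Measure.pi_univ, Fin.prod_univ_succ, ENNReal.toReal_mul]

end PiFinSucc

section Harris

variable {α : Type*} [LinearOrder α] [MeasurableSpace α]

theorem integral_mul_measureReal_le_of_monotone_of_antitone {μ : Measure α} [IsFiniteMeasure μ]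
    {F G : α → ℝ} (hF : Monotone F) (hG : Antitone G) (hFi : Integrable F μ)
    (hGi : Integrable G μ) (hFGi : Integrable (fun a => F a * G a) μ) :
    (∫ a, F a * G a ∂μ) * μ.real univ ≤ (∫ a, F a ∂μ) * ∫ a, G a ∂μ := by
  -- integrate `(F a - F b) * (G a - G b) ≤ 0` first in `b`, then in `a`
  have pointwise : ∀ a b, F a * G a + F b * G b ≤ F a * G b + G a * F b := fun a b => by
    rcases le_total a b with h | h <;> nlinarith [hF h, hG h]
  have inner : ∀ a, F a * G a * μ.real univ + ∫ b, F b * G b ∂μ ≤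
      F a * (∫ b, G b ∂μ) + G a * ∫ b, F b ∂μ := fun a => by
    have := integral_mono ((integrable_const _).add hFGi)
      ((hGi.const_mul (F a)).add (hFi.const_mul (G a))) (pointwise a)
    rwa [integral_add' (integrable_const _) hFGi, integral_add' (hGi.const_mul _)
      (hFi.const_mul _), integral_const, integral_const_mul, integral_const_mul, smul_eq_mul,
      mul_comm (μ.real univ)] at this
  have := integral_mono ((hFGi.mul_const _).add (integrable_const _))
    ((hFi.mul_const _).add (hGi.mul_const _)) inner
  rw [integral_add' (hFGi.mul_const _) (integrable_const _), integral_add' (hFi.mul_const _)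
    (hGi.mul_const _), integral_const, integral_mul_const, integral_mul_const,
    integral_mul_const, smul_eq_mul] at this
  linarith

theorem integral_mul_measureReal_le_pi_of_monotone_of_antitone {N : ℕ}
    (μ : Fin N → Measure α) [∀ i, IsFiniteMeasure (μ i)] {F G : (Fin N → α) → ℝ}
    (hF : Monotone F) (hG : Antitone G) (hFm : Measurable F) (hGm : Measurable G) {CF CG : ℝ}
    (hFb : ∀ x, ‖F x‖ ≤ CF) (hGb : ∀ x, ‖G x‖ ≤ CG) :
    (∫ x, F x * G x ∂Measure.pi μ) * (Measure.pi μ).real univ ≤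
      (∫ x, F x ∂Measure.pi μ) * ∫ x, G x ∂Measure.pi μ := by
  induction N generalizing CF CG with
  | zero => simp [Measure.pi_of_empty μ]
  | succ N ih =>
    set π' := Measure.pi fun i : Fin N => μ i.succ
    have hFGb : ∀ x, ‖F x * G x‖ ≤ CF * CG := fun x => norm_mul_le_of_le (hFb x) (hGb x)
    have onProd : ∀ {H : (Fin (N + 1) → α) → ℝ} {C : ℝ}, Measurable H → (∀ x, ‖H x‖ ≤ C) →
        Integrable (fun q : α × (Fin N → α) => H (Fin.cons q.1 q.2)) ((μ 0).prod π') :=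
      fun hH hHb => (hH.comp measurable_fin_cons).integrable_of_norm_le fun _ => hHb _
    have onSlice : ∀ {H : (Fin (N + 1) → α) → ℝ} {C : ℝ}, Measurable H → (∀ x, ‖H x‖ ≤ C) →
        ∀ a, Integrable (fun z => H (Fin.cons a z)) π' := fun hH hHb a =>
      (hH.comp (measurable_fin_cons.comp measurable_prodMk_left)).integrable_of_norm_le
        fun _ => hHb _
    have fubini : ∀ {H : (Fin (N + 1) → α) → ℝ} {C : ℝ}, Measurable H → (∀ x, ‖H x‖ ≤ C) →
        ∫ x, H x ∂Measure.pi μ = ∫ a, ∫ z, H (Fin.cons a z) ∂π' ∂μ 0 :=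
      fun hH hHb => (integral_pi_fin_succ μ _).trans (integral_prod _ (onProd hH hHb))
    set Φ : α → ℝ := fun a => ∫ z, F (Fin.cons a z) ∂π'
    set Ψ : α → ℝ := fun a => ∫ z, G (Fin.cons a z) ∂π'
    set Ξ : α → ℝ := fun a => ∫ z, F (Fin.cons a z) * G (Fin.cons a z) ∂π'
    have hΞ : ∀ a, Ξ a * π'.real univ ≤ Φ a * Ψ a := fun a =>
      ih _ (fun z z' h => hF (Fin.cons_le_cons.mpr ⟨le_rfl, h⟩))
        (fun z z' h => hG (Fin.cons_le_cons.mpr ⟨le_rfl, h⟩))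
        (hFm.comp (measurable_fin_cons.comp measurable_prodMk_left))
        (hGm.comp (measurable_fin_cons.comp measurable_prodMk_left)) (fun _ => hFb _)
        (fun _ => hGb _)
    have hΦ : Monotone Φ := fun a a' h => integral_mono (onSlice hFm hFb a)
      (onSlice hFm hFb a') fun z => hF (Fin.cons_le_cons.mpr ⟨h, le_rfl⟩)
    have hΨ : Antitone Ψ := fun a a' h => integral_mono (onSlice hGm hGb a')
      (onSlice hGm hGb a) fun z => hG (Fin.cons_le_cons.mpr ⟨h, le_rfl⟩)
    have hΦi : Integrable Φ (μ 0) := (onProd hFm hFb).integral_prod_left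
    have hΨi : Integrable Ψ (μ 0) := (onProd hGm hGb).integral_prod_left
    have hΞi : Integrable Ξ (μ 0) := (onProd (hFm.mul hGm) hFGb).integral_prod_left
    have hΦΨi : Integrable (fun a => Φ a * Ψ a) (μ 0) := hΨi.bdd_mul hΦi.aestronglyMeasurable
      (ae_of_all _ fun a => norm_integral_le_of_norm_le_const (ae_of_all _ fun z => hFb _))
    rw [fubini (H := fun x => F x * G x) (hFm.mul hGm) hFGb, fubini hFm hFb, fubini hGm hGb,
      measureReal_pi_univ_fin_succ]
    calc (∫ a, Ξ a ∂μ 0) * ((μ 0).real univ * π'.real univ)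
        = (∫ a, Ξ a * π'.real univ ∂μ 0) * (μ 0).real univ := by rw [integral_mul_const]; ring
      _ ≤ (∫ a, Φ a * Ψ a ∂μ 0) * (μ 0).real univ :=
        mul_le_mul_of_nonneg_right (integral_mono (hΞi.mul_const _) hΦΨi hΞ) measureReal_nonneg
      _ ≤ (∫ a, Φ a ∂μ 0) * ∫ a, Ψ a ∂μ 0 :=
        integral_mul_measureReal_le_of_monotone_of_antitone hΦ hΨ hΦi hΨi hΦΨi

theorem lintegral_mul_measure_le_pi_of_monotone_of_antitone {N : ℕ}
    (μ : Fin N → Measure α) [∀ i, IsFiniteMeasure (μ i)] {F G : (Fin N → α) → ℝ}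
    (hF : Monotone F) (hG : Antitone G) (hFm : Measurable F) (hGm : Measurable G) {CF CG : ℝ}
    (hF0 : ∀ x, 0 ≤ F x) (hG0 : ∀ x, 0 ≤ G x) (hFb : ∀ x, F x ≤ CF) (hGb : ∀ x, G x ≤ CG) :
    (∫⁻ x, ENNReal.ofReal (F x) * ENNReal.ofReal (G x) ∂Measure.pi μ) * Measure.pi μ univ ≤
      (∫⁻ x, ENNReal.ofReal (F x) ∂Measure.pi μ) * ∫⁻ x, ENNReal.ofReal (G x) ∂Measure.pi μ := by
  have hFb' : ∀ x, ‖F x‖ ≤ CF := fun x => (Real.norm_of_nonneg (hF0 x)).trans_le (hFb x)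
  have hGb' : ∀ x, ‖G x‖ ≤ CG := fun x => (Real.norm_of_nonneg (hG0 x)).trans_le (hGb x)
  have hFG0 : ∀ x, 0 ≤ F x * G x := fun x => mul_nonneg (hF0 x) (hG0 x)
  simp_rw [← ENNReal.ofReal_mul (hF0 _)]
  rw [← ofReal_integral_eq_lintegral_ofReal (hFm.integrable_of_norm_le hFb') (ae_of_all _ hF0),
    ← ofReal_integral_eq_lintegral_ofReal (hGm.integrable_of_norm_le hGb') (ae_of_all _ hG0),
    ← ofReal_integral_eq_lintegral_ofReal ((hFm.mul hGm).integrable_of_norm_le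
      (f := fun x => F x * G x) fun x => norm_mul_le_of_le (hFb' x) (hGb' x)) (ae_of_all _ hFG0),
    ← ENNReal.ofReal_toReal (measure_ne_top (Measure.pi μ) univ),
    ← ENNReal.ofReal_mul (integral_nonneg hFG0), ← ENNReal.ofReal_mul (integral_nonneg hF0)]
  exact ENNReal.ofReal_le_ofReal
    (integral_mul_measureReal_le_pi_of_monotone_of_antitone μ hF hG hFm hGm hFb' hGb')

end Harris

section OrderStatistics

variable {n : ℕ}

lemma kthLargest_mem {s : Set ℝ} (x : Fin n → ℝ) (k : ℕ) (h0 : 0 ∈ s) (hx : ∀ i, x i ∈ s) :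
    kthLargest x k ∈ s := by
  unfold kthLargest
  split_ifs
  exacts [hx _, h0]

lemma apply_le_apply_sort (x : Fin n → ℝ) {j k : Fin n} (h : (Tuple.sort x).symm j ≤ k) :
    x j ≤ x (Tuple.sort x k) := by
  simpa using Tuple.monotone_sort x h

lemma kthLargest_one_eq_sup' (hn : 0 < n) (x : Fin n → ℝ) :
    kthLargest x 1 = Finset.univ.sup' (Finset.univ_nonempty_iff.mpr ⟨⟨0, hn⟩⟩) x := by
  rw [kthLargest, dif_pos (by omega)]
  refine le_antisymm (Finset.le_sup' x (Finset.mem_univ _)) (Finset.sup'_le _ _ fun j _ => ?_)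
  exact apply_le_apply_sort x (Fin.le_def.mpr (by simp only; omega))

lemma offDiag_univ_nonempty (hn : 2 ≤ n) : (Finset.univ : Finset (Fin n)).offDiag.Nonempty :=
  ⟨(⟨0, by omega⟩, ⟨1, hn⟩), by simp [Fin.ext_iff]⟩

lemma kthLargest_two_eq_sup'_offDiag (hn : 2 ≤ n) (x : Fin n → ℝ) :
    kthLargest x 2 = (Finset.univ : Finset (Fin n)).offDiag.sup' (offDiag_univ_nonempty hn)
      fun q => x q.1 ⊓ x q.2 := by
  have h : n - 2 < n := by omega
  rw [kthLargest, dif_pos h]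
  set σ := Tuple.sort x
  set top : Fin n := ⟨n - 1, by omega⟩
  set snd : Fin n := ⟨n - 2, h⟩
  have below_top : ∀ j, j ≠ σ top → x j ≤ x (σ snd) := fun j hj => by
    have : σ.symm j ≠ top := fun e => hj (by rw [← e, σ.apply_symm_apply])
    have : (σ.symm j : ℕ) ≠ n - 1 := fun e => this (Fin.ext e)
    refine apply_le_apply_sort x (Fin.le_def.mpr ?_)
    show (σ.symm j : ℕ) ≤ n - 2
    omega
  apply le_antisymm
  · have hne : σ snd ≠ σ top := σ.injective.ne (by simp [Fin.ext_iff, snd, top]; omega)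
    refine le_trans (le_inf le_rfl ?_) (Finset.le_sup' (fun q => x q.1 ⊓ x q.2)
      (b := (σ snd, σ top)) (Finset.mem_offDiag.mpr ⟨Finset.mem_univ _, Finset.mem_univ _, hne⟩))
    exact apply_le_apply_sort x (by simp [Fin.le_def, snd, top]; omega)
  · refine Finset.sup'_le _ _ fun q hq => ?_
    obtain ⟨-, -, hne⟩ := Finset.mem_offDiag.mp hq
    by_cases h1 : q.1 = σ top
    · exact inf_le_right.trans (below_top _ (h1 ▸ Ne.symm hne))
    · exact inf_le_left.trans (below_top _ h1)

lemma kthLargest_one_lt_iff (hn : 0 < n) {x : Fin n → ℝ} {p : ℝ} :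
    kthLargest x 1 < p ↔ ∀ i, x i < p := by
  rw [kthLargest_one_eq_sup' hn, Finset.sup'_lt_iff]
  simp

lemma monotone_kthLargest_one (hn : 0 < n) : Monotone fun x : Fin n → ℝ => kthLargest x 1 :=
  fun x y h => by simpa only [kthLargest_one_eq_sup' hn] using Finset.sup'_mono_fun fun i _ => h i

lemma monotone_kthLargest_two (hn : 2 ≤ n) : Monotone fun x : Fin n → ℝ => kthLargest x 2 :=
  fun x y h => by
    simpa only [kthLargest_two_eq_sup'_offDiag hn] using
      Finset.sup'_mono_fun fun q _ => inf_le_inf (h q.1) (h q.2)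

lemma measurable_kthLargest_one (hn : 0 < n) :
    Measurable fun x : Fin n → ℝ => kthLargest x 1 := by
  simp only [kthLargest_one_eq_sup' hn]
  fun_prop

lemma measurable_kthLargest_two (hn : 2 ≤ n) :
    Measurable fun x : Fin n → ℝ => kthLargest x 2 := by
  simp only [kthLargest_two_eq_sup'_offDiag hn]
  fun_prop

end OrderStatistics

section Uniform

lemma unif_Iio {c : ℝ} (hc : c ≤ 1) : unif (Iio c) = ENNReal.ofReal c := by
  have : Iio c ∩ Icc 0 1 = Ico 0 c := by
    ext; simp only [mem_inter_iff, mem_Iio, mem_Icc, mem_Ico]; grind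
  rw [unif, Measure.restrict_apply' measurableSet_Icc, this, Real.volume_Ico, sub_zero]

lemma unif_Ioi {c : ℝ} (hc : 0 ≤ c) : unif (Ioi c) = ENNReal.ofReal (1 - c) := by
  have : Ioi c ∩ Icc 0 1 = Ioc c 1 := by
    ext; simp only [mem_inter_iff, mem_Ioi, mem_Icc, mem_Ioc]; grind
  rw [unif, Measure.restrict_apply' measurableSet_Icc, this, Real.volume_Ioc]

lemma unif_Iic {c : ℝ} (hc : c ≤ 1) : unif (Iic c) = ENNReal.ofReal c := by
  have : Iic c ∩ Icc 0 1 = Icc 0 c := by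
    ext; simp only [mem_inter_iff, mem_Iic, mem_Icc]; grind
  rw [unif, Measure.restrict_apply' measurableSet_Icc, this, Real.volume_Icc, sub_zero]

lemma unif_setOf_add_mul_lt {s p : ℝ} (hsp : s ≤ p) (hp : p < 1) :
    unif {u | s + u * (1 - s) < p} = ENNReal.ofReal ((p - s) / (1 - s)) := by
  have hs : 0 < 1 - s := by linarith
  have : {u | s + u * (1 - s) < p} = Iio ((p - s) / (1 - s)) := by
    ext u
    rw [mem_ofPred_eq, mem_Iio, lt_div_iff₀ hs]
    constructor <;> intro <;> linarith
  rw [this, unif_Iio ((div_le_one hs).mpr (by linarith))]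

lemma pi_unif_setOf_mem_iff_lt_and_lt {k : ℕ} {t p : ℝ} (ht : 0 ≤ t) (htp : t ≤ p) (hp : p ≤ 1)
    {A : Finset (Fin k)} {a : Fin k} (ha : a ∈ A) :
    Measure.pi (fun _ : Fin k => unif) {y | (∀ j, j ∈ A ↔ t < y j) ∧ p < y a} =
      ENNReal.ofReal ((1 - p) * (1 - t) ^ (A.card - 1) * t ^ (k - A.card)) := by
  set s : Fin k → Set ℝ := fun j => if j ∈ A then Ioi (if j = a then p else t) else Iic t
  have hs : {y : Fin k → ℝ | (∀ j, j ∈ A ↔ t < y j) ∧ p < y a} = univ.pi s := by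
    ext y
    simp only [mem_ofPred_eq, mem_univ_pi, s]
    constructor
    · rintro ⟨hA, hpa⟩ j
      by_cases hj : j ∈ A
      · by_cases hja : j = a
        · subst hja; simpa [hj] using hpa
        · simpa [hj, hja] using (hA j).mp hj
      · simpa [hj] using mt (hA j).mpr hj
    · intro hy
      refine ⟨fun j => ⟨fun hj => ?_, fun hj => ?_⟩, by simpa [ha] using hy a⟩
      · have := hy j
        split_ifs at this
        exacts [htp.trans_lt this, this]
      · by_contra hjA
        have := hy j
        simp only [hjA, if_false, mem_Iic] at this
        exact this.not_gt hj
  have h1 : unif (s a) = ENNReal.ofReal (1 - p) := by simp [s, ha, unif_Ioi (ht.trans htp)]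
  have h2 : ∏ j ∈ A.erase a, unif (s j) = ENNReal.ofReal (1 - t) ^ (A.card - 1) := by
    rw [Finset.prod_congr rfl fun j hj => ?_, Finset.prod_const, Finset.card_erase_of_mem ha]
    obtain ⟨hja, hjA⟩ := Finset.mem_erase.mp hj
    simp [s, hja, hjA, unif_Ioi ht]
  have h3 : ∏ j ∈ Aᶜ, unif (s j) = ENNReal.ofReal t ^ (k - A.card) := by
    rw [Finset.prod_congr rfl fun j hj => ?_, Finset.prod_const, Finset.card_compl,
      Fintype.card_fin]
    simp [s, Finset.mem_compl.mp hj, unif_Iic (htp.trans hp)]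
  rw [hs, Measure.pi_pi, ← Finset.prod_mul_prod_compl A, ← Finset.mul_prod_erase A _ ha, h1, h2,
    h3, ENNReal.ofReal_mul (mul_nonneg (by linarith) (pow_nonneg (by linarith) _)),
    ENNReal.ofReal_mul (by linarith), ENNReal.ofReal_pow ht, ENNReal.ofReal_pow (by linarith)]

end Uniform

section PickedY

noncomputable def pickIndex (c : ℕ) (v : ℝ) : ℕ := min ⌊v * c⌋.toNat (c - 1)

lemma measurable_pickIndex (c : ℕ) : Measurable (pickIndex c) :=
  (measurable_of_countable fun z : ℤ => min z.toNat (c - 1)).comp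
    (Int.measurable_floor.comp (measurable_id.mul_const _))

lemma unif_pickIndex_eq {c i : ℕ} (hi : i < c) :
    unif {v | pickIndex c v = i} = ENNReal.ofReal (c : ℝ)⁻¹ := by
  have hc : (0 : ℝ) < c := by exact_mod_cast (Nat.zero_le i).trans_lt hi
  have hic : (i : ℝ) + 1 ≤ c := by exact_mod_cast hi
  have hlen : (i + 1 : ℝ) / c - i / c = (c : ℝ)⁻¹ := by field_simp; ring
  have lower : Ico ((i : ℝ) / c) ((i + 1) / c) ⊆ {v | pickIndex c v = i} ∩ Icc 0 1 := by
    rintro v ⟨hl, hr⟩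
    rw [div_le_iff₀ hc] at hl
    rw [lt_div_iff₀ hc] at hr
    have hv : 0 ≤ v := by nlinarith [(Nat.cast_nonneg i : (0 : ℝ) ≤ i)]
    refine ⟨?_, hv, by nlinarith⟩
    have : ⌊v * c⌋₊ = i := (Nat.floor_eq_iff (by positivity)).mpr ⟨hl, hr⟩
    simp only [mem_ofPred_eq, pickIndex, Int.floor_toNat, this]
    omega
  have upper : {v | pickIndex c v = i} ∩ Icc 0 1 ⊆ Icc ((i : ℝ) / c) ((i + 1) / c) := by
    rintro v ⟨hv, hv0, hv1⟩
    simp only [mem_ofPred_eq, pickIndex, Int.floor_toNat] at hv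
    rw [mem_Icc, div_le_iff₀ hc, le_div_iff₀ hc]
    constructor
    · exact le_trans (by exact_mod_cast (le_min_iff.mp hv.ge).1) (Nat.floor_le (by positivity))
    · rcases lt_or_ge ⌊v * c⌋₊ (c - 1) with h | h
      · rw [min_eq_left h.le] at hv
        exact (hv ▸ Nat.lt_floor_add_one (v * c)).le
      · have : i + 1 = c := by omega
        rw [← Nat.cast_add_one, this]
        nlinarith
  apply le_antisymm
  · calc unif {v | pickIndex c v = i} ≤ volume (Icc ((i : ℝ) / c) ((i + 1) / c)) := by
          rw [unif, Measure.restrict_apply' measurableSet_Icc]; exact measure_mono upper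
      _ = ENNReal.ofReal (c : ℝ)⁻¹ := by rw [Real.volume_Icc, hlen]
  · calc ENNReal.ofReal (c : ℝ)⁻¹ = volume (Ico ((i : ℝ) / c) ((i + 1) / c)) := by
          rw [Real.volume_Ico, hlen]
      _ ≤ unif {v | pickIndex c v = i} := by
          rw [unif, Measure.restrict_apply' measurableSet_Icc]; exact measure_mono lower

variable {k : ℕ} {y : Fin k → ℝ} {t p v : ℝ}

lemma pickedY_eq {A : Finset (Fin k)} (hA : ∀ j, j ∈ A ↔ t < y j) :
    pickedY y t v = ((A.sort (· ≤ ·)).map y).getD (pickIndex A.card v) 0 := by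
  obtain rfl : Finset.univ.filter (fun j => t < y j) = A := Finset.ext fun j => by simp [hA]
  rfl

lemma getD_map_sort_eq (A : Finset (Fin k)) {i : ℕ} (hi : i < A.card) :
    ((A.sort (· ≤ ·)).map y).getD i 0 = y (A.orderEmbOfFin rfl ⟨i, hi⟩) := by
  rw [List.getD_eq_getElem _ _ (by simpa using hi)]
  simp [Finset.orderEmbOfFin_apply]

lemma lt_pickedY_iff (hp : 0 ≤ p) :
    p < pickedY y t v ↔ ∃ A : Finset (Fin k), ∃ i : Fin A.card,
      (∀ j, j ∈ A ↔ t < y j) ∧ p < y (A.orderEmbOfFin rfl i) ∧ pickIndex A.card v = i := by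
  obtain ⟨A, hA⟩ : ∃ A : Finset (Fin k), ∀ j, j ∈ A ↔ t < y j :=
    ⟨Finset.univ.filter fun j => t < y j, by simp⟩
  rw [pickedY_eq hA]
  constructor
  · intro h
    have hi : pickIndex A.card v < A.card := by
      by_contra hc
      rw [List.getD_eq_default _ _ (by simpa using hc)] at h
      exact hp.not_gt h
    exact ⟨A, ⟨_, hi⟩, hA, by rwa [getD_map_sort_eq A hi] at h, rfl⟩
  · rintro ⟨B, i, hB, hpi, hidx⟩
    obtain rfl : B = A := Finset.ext fun j => (hB j).trans (hA j).symm
    rwa [hidx, getD_map_sort_eq B i.isLt]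

lemma measurableSet_lt_pickedY (hp : 0 ≤ p) :
    MeasurableSet {r : (Fin k → ℝ) × ℝ × ℝ | p < pickedY r.1 r.2.1 r.2.2} := by
  have : {r : (Fin k → ℝ) × ℝ × ℝ | p < pickedY r.1 r.2.1 r.2.2} = ⋃ (A : Finset (Fin k)),
      ⋃ i : Fin A.card, {r | (∀ j, j ∈ A ↔ r.2.1 < r.1 j) ∧ p < r.1 (A.orderEmbOfFin rfl i)} ∩
        {r | pickIndex A.card r.2.2 = i} := by
    ext r
    simp [lt_pickedY_iff hp, and_assoc]
  rw [this]
  refine .iUnion fun A => .iUnion fun i => MeasurableSet.inter (by measurability) ?_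
  exact (measurable_pickIndex _).comp (by fun_prop) (measurableSet_singleton _)

lemma sum_pow_card_pred_mul_pow (ht : t ≠ 1) :
    ∑ A : Finset (Fin k), (if A.card = 0 then 0 else (1 - t) ^ (A.card - 1) * t ^ (k - A.card)) =
      ∑ j ∈ Finset.range k, t ^ j := by
  refine mul_left_cancel₀ (sub_ne_zero.mpr ht.symm) ?_
  have term : ∀ A : Finset (Fin k), (1 - t) *
      (if A.card = 0 then 0 else (1 - t) ^ (A.card - 1) * t ^ (k - A.card)) =
      (1 - t) ^ A.card * t ^ (k - A.card) - if A = ∅ then t ^ k else 0 := fun A => by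
    rcases Nat.eq_zero_or_pos A.card with h | h
    · simp [Finset.card_eq_zero.mp h]
    · rw [if_neg h.ne', if_neg (Finset.nonempty_iff_ne_empty.mp (Finset.card_pos.mp h)),
        sub_zero, ← mul_assoc, ← pow_succ', Nat.sub_add_cancel h]
  have binomial := Finset.sum_pow_mul_eq_add_pow (1 - t) t (Finset.univ : Finset (Fin k))
  rw [Finset.powerset_univ, Finset.card_univ, Fintype.card_fin, sub_add_cancel, one_pow]
    at binomial
  rw [Finset.mul_sum, Finset.sum_congr rfl fun A _ => term A, Finset.sum_sub_distrib, binomial,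
    Finset.sum_ite_eq' Finset.univ, if_pos (Finset.mem_univ _), mul_neg_geom_sum]

lemma measure_lt_pickedY (ht : 0 ≤ t) (htp : t ≤ p) (hp : p < 1) :
    ((Measure.pi fun _ : Fin k => unif).prod unif) {yv | p < pickedY yv.1 t yv.2} =
      ENNReal.ofReal ((1 - p) * ∑ j ∈ Finset.range k, t ^ j) := by
  have hterm : ∀ c d : ℕ, 0 ≤ (1 - p) * (1 - t) ^ c * t ^ d := fun c d =>
    mul_nonneg (mul_nonneg (by linarith) (pow_nonneg (by linarith) _)) (pow_nonneg ht _)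
  set piece : (A : Finset (Fin k)) → Fin A.card → Set ((Fin k → ℝ) × ℝ) := fun A i =>
    {y | (∀ j, j ∈ A ↔ t < y j) ∧ p < y (A.orderEmbOfFin rfl i)} ×ˢ {v | pickIndex A.card v = i}
  have hunion : {yv : (Fin k → ℝ) × ℝ | p < pickedY yv.1 t yv.2} = ⋃ A, ⋃ i, piece A i := by
    ext ⟨y, v⟩
    simp [piece, lt_pickedY_iff (ht.trans htp), and_assoc]
  have hmeas : ∀ A i, MeasurableSet (piece A i) := fun A i =>
    (by measurability : MeasurableSet _).prod (measurable_pickIndex _ (measurableSet_singleton _))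
  have hdisj_A : Pairwise (Function.onFun Disjoint fun A => ⋃ i, piece A i) := by
    refine fun A B hAB => Set.disjoint_iUnion_left.mpr fun i => Set.disjoint_iUnion_right.mpr
      fun i' => Set.disjoint_left.mpr fun z hA hB => hAB ?_
    exact Finset.ext fun j => (hA.1.1 j).trans (hB.1.1 j).symm
  have hdisj_i : ∀ A, Pairwise (Function.onFun Disjoint (piece A)) := fun A i i' hii' =>
    Set.disjoint_left.mpr fun z hi hi' => hii' (Fin.ext (hi.2.symm.trans hi'.2))
  have hpiece : ∀ A i, (Measure.pi fun _ : Fin k => unif).prod unif (piece A i) =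
      ENNReal.ofReal ((1 - p) * (1 - t) ^ (A.card - 1) * t ^ (k - A.card) * (A.card : ℝ)⁻¹) := by
    intro A i
    rw [Measure.prod_prod, pi_unif_setOf_mem_iff_lt_and_lt ht htp hp.le
      (Finset.orderEmbOfFin_mem A rfl i), unif_pickIndex_eq i.isLt,
      ← ENNReal.ofReal_mul (hterm _ _)]
  rw [hunion, measure_iUnion hdisj_A fun A => MeasurableSet.iUnion (hmeas A), tsum_fintype]
  simp_rw [measure_iUnion (hdisj_i _) (hmeas _), tsum_fintype, hpiece, Finset.sum_const,
    Finset.card_univ, Fintype.card_fin, nsmul_eq_mul]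
  rw [← sum_pow_card_pred_mul_pow (htp.trans_lt hp).ne, Finset.mul_sum,
    ENNReal.ofReal_sum_of_nonneg fun A _ => by split_ifs <;> simp [← mul_assoc, hterm]]
  refine Finset.sum_congr rfl fun A _ => ?_
  rcases Nat.eq_zero_or_pos A.card with h | h
  · simp [h]
  · rw [if_neg h.ne', ← ENNReal.ofReal_natCast, ← ENNReal.ofReal_mul (Nat.cast_nonneg _)]
    congr 1
    field_simp

end PickedY

lemma Ystar_eq_pickedY {n k : ℕ} (x : Fin n → ℝ) (y : Fin k → ℝ) (v : ℝ) :
    Ystar x y v = pickedY y (kthLargest x 1) v := by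
  unfold Ystar
  split_ifs with h
  · rw [pickedY_eq (A := ∅) fun j => by simpa using (h j).le, Finset.sort_empty]
    rfl
  · rfl

/-- `Pr[Y* > p | X_{(1),n} = t]` for `t ∈ [0, p]`, extended by clamping `t` to `[0, p]`. -/
noncomputable def condProbYstarGt (k : ℕ) (p t : ℝ) : ℝ :=
  (1 - p) * ∑ j ∈ Finset.range k, max 0 (min t p) ^ j

/-- `Pr[W_{2,n} < p | X_{(2),n} = s]` for `s ≤ p`, extended by clamping `s` to `(-∞, p]`. -/
noncomputable def condProbWLt (p s : ℝ) : ℝ := (p - min s p) / (1 - min s p)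

section CondProb

variable {k : ℕ} {p : ℝ}

lemma condProbYstarGt_of_mem {t : ℝ} (ht : t ∈ Icc 0 p) :
    condProbYstarGt k p t = (1 - p) * ∑ j ∈ Finset.range k, t ^ j := by
  simp [condProbYstarGt, min_eq_left ht.2, max_eq_right ht.1]

lemma monotone_condProbYstarGt (hp : p ≤ 1) : Monotone (condProbYstarGt k p) :=
  fun _ _ h => mul_le_mul_of_nonneg_left (Finset.sum_le_sum fun _ _ =>
    pow_le_pow_left₀ (le_max_left _ _) (max_le_max le_rfl (min_le_min_right _ h)) _) (by linarith)

lemma measurable_condProbYstarGt : Measurable (condProbYstarGt k p) := by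
  unfold condProbYstarGt; fun_prop

lemma condProbYstarGt_nonneg (hp : p ≤ 1) (t : ℝ) : 0 ≤ condProbYstarGt k p t :=
  mul_nonneg (by linarith) (Finset.sum_nonneg fun _ _ => pow_nonneg (le_max_left _ _) _)

lemma condProbYstarGt_le (hp0 : 0 ≤ p) (hp1 : p ≤ 1) (t : ℝ) : condProbYstarGt k p t ≤ k :=
  calc condProbYstarGt k p t ≤ 1 * ∑ _j ∈ Finset.range k, (1 : ℝ) :=
        mul_le_mul (by linarith) (Finset.sum_le_sum fun _ _ => pow_le_one₀ (le_max_left _ _)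
          (max_le zero_le_one ((min_le_right _ _).trans hp1)))
          (Finset.sum_nonneg fun _ _ => pow_nonneg (le_max_left _ _) _) zero_le_one
    _ = k := by simp

lemma condProbWLt_of_le {s : ℝ} (hs : s ≤ p) : condProbWLt p s = (p - s) / (1 - s) := by
  rw [condProbWLt, min_eq_left hs]

lemma antitone_condProbWLt (hp : p < 1) : Antitone (condProbWLt p) := fun s s' h => by
  have hle : min s p ≤ min s' p := min_le_min_right _ h
  have hs' : min s' p ≤ p := min_le_right _ _
  rw [condProbWLt, condProbWLt, div_le_div_iff₀ (by linarith) (by linarith)]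
  nlinarith

lemma measurable_condProbWLt : Measurable (condProbWLt p) := by
  unfold condProbWLt; fun_prop

lemma condProbWLt_nonneg (hp : p < 1) (s : ℝ) : 0 ≤ condProbWLt p s :=
  div_nonneg (by linarith [min_le_right s p]) (by linarith [min_le_right s p])

lemma condProbWLt_le_one (hp : p < 1) (s : ℝ) : condProbWLt p s ≤ 1 :=
  (div_le_one (by linarith [min_le_right s p])).mpr (by linarith)

end CondProb

lemma prod_prod_setOf_eq_setLIntegral {X Y Z : Type*} [MeasurableSpace X] [MeasurableSpace Y]
    [MeasurableSpace Z] {μ : Measure X} {ν₁ : Measure Y} {ν₂ : Measure Z} [SFinite ν₁]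
    [SFinite ν₂] {A : Set X} {B : X → Set Y} {C : X → Set Z} (hA : MeasurableSet A)
    (hB : MeasurableSet {q : X × Y | q.2 ∈ B q.1}) (hC : MeasurableSet {q : X × Z | q.2 ∈ C q.1}) :
    μ.prod (ν₁.prod ν₂) {ω | ω.1 ∈ A ∧ ω.2.1 ∈ B ω.1 ∧ ω.2.2 ∈ C ω.1} =
      ∫⁻ x in A, ν₁ (B x) * ν₂ (C x) ∂μ := by
  have hmeas : MeasurableSet {ω : X × Y × Z | ω.1 ∈ A ∧ ω.2.1 ∈ B ω.1 ∧ ω.2.2 ∈ C ω.1} :=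
    (measurable_fst hA).inter <|
      (hB.preimage (measurable_fst.prodMk (measurable_fst.comp measurable_snd))).inter
      (hC.preimage (measurable_fst.prodMk (measurable_snd.comp measurable_snd)))
  rw [Measure.prod_apply hmeas, ← lintegral_indicator hA]
  refine lintegral_congr fun x => ?_
  by_cases hx : x ∈ A
  · have : Prod.mk x ⁻¹' {ω : X × Y × Z | ω.1 ∈ A ∧ ω.2.1 ∈ B ω.1 ∧ ω.2.2 ∈ C ω.1} =
        B x ×ˢ C x := by
      ext; simp [hx]
    rw [indicator_of_mem hx, this, Measure.prod_prod]
  · have : Prod.mk x ⁻¹' {ω : X × Y × Z | ω.1 ∈ A ∧ ω.2.1 ∈ B ω.1 ∧ ω.2.2 ∈ C ω.1} = ∅ := by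
      ext; simp [hx]
    rw [indicator_of_notMem hx, this, measure_empty]

section Conditioning

variable {n : ℕ} {p : ℝ}

lemma pi_unif_restrict_kthLargest_one_lt (hn : 0 < n) :
    (Measure.pi fun _ : Fin n => unif).restrict {x | kthLargest x 1 < p} =
      Measure.pi fun _ => unif.restrict (Iio p) := by
  have : {x : Fin n → ℝ | kthLargest x 1 < p} = univ.pi fun _ => Iio p := by
    ext; simp [kthLargest_one_lt_iff hn]
  rw [this, Measure.restrict_pi_pi]

lemma P₁₂_setOf_eq_lintegral (hn : 0 < n) (m : ℕ) (p : ℝ) {B : (Fin n → ℝ) → Set ℝ}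
    {C : (Fin n → ℝ) → Set ((Fin (m - 1) → ℝ) × ℝ)}
    (hB : MeasurableSet {q : (Fin n → ℝ) × ℝ | q.2 ∈ B q.1})
    (hC : MeasurableSet {q : (Fin n → ℝ) × (Fin (m - 1) → ℝ) × ℝ | q.2 ∈ C q.1}) :
    P₁₂ n m {ω | ω.2.2 ∈ C ω.1 ∧ kthLargest ω.1 1 < p ∧ ω.2.1 ∈ B ω.1} =
      ∫⁻ x, unif (B x) * ((Measure.pi fun _ => unif).prod unif) (C x)
        ∂Measure.pi fun _ => unif.restrict (Iio p) := by
  rw [← pi_unif_restrict_kthLargest_one_lt hn, ← prod_prod_setOf_eq_setLIntegral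
    (measurableSet_lt (measurable_kthLargest_one hn) measurable_const) hB hC]
  simp only [← and_rotate]
  rfl

lemma measurableSet_Wvar_lt (hn : 2 ≤ n) (p : ℝ) :
    MeasurableSet {q : (Fin n → ℝ) × ℝ | Wvar 2 q.1 q.2 < p} := by
  have := measurable_kthLargest_two hn
  exact measurableSet_lt (by unfold Wvar; fun_prop) measurable_const

lemma measurableSet_lt_Ystar {k : ℕ} (hn : 0 < n) (hp : 0 ≤ p) :
    MeasurableSet {q : (Fin n → ℝ) × (Fin k → ℝ) × ℝ | p < Ystar q.1 q.2.1 q.2.2} := by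
  have := measurable_kthLargest_one hn
  simp_rw [Ystar_eq_pickedY]
  exact measurableSet_lt_pickedY hp |>.preimage (f := fun q : (Fin n → ℝ) × (Fin k → ℝ) × ℝ =>
    (q.2.1, kthLargest q.1 1, q.2.2)) (by fun_prop)

lemma ae_unif_Wvar_lt_and_measure_lt_Ystar (hp0 : 0 ≤ p) (hp1 : p < 1) (k : ℕ) :
    ∀ᵐ x ∂(Measure.pi fun _ : Fin n => unif.restrict (Iio p)),
      unif {u | Wvar 2 x u < p} = ENNReal.ofReal (condProbWLt p (kthLargest x 2)) ∧
      ((Measure.pi fun _ : Fin k => unif).prod unif) {yv | p < Ystar x yv.1 yv.2} =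
        ENNReal.ofReal (condProbYstarGt k p (kthLargest x 1)) := by
  have hbox : ∀ᵐ x ∂(Measure.pi fun _ : Fin n => unif.restrict (Iio p)), ∀ i, x i ∈ Icc 0 p := by
    refine ae_all_iff.mpr fun i => Measure.tendsto_eval_ae_ae.eventually ?_
    rw [unif, Measure.restrict_restrict measurableSet_Iio]
    filter_upwards [ae_restrict_mem (measurableSet_Iio.inter measurableSet_Icc)] with u hu
    exact ⟨hu.2.1, hu.1.le⟩
  filter_upwards [hbox] with x hx
  have hs := (kthLargest_mem x 2 (s := Icc 0 p) ⟨le_rfl, hp0⟩ hx).2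
  have ht := kthLargest_mem x 1 (s := Icc 0 p) ⟨le_rfl, hp0⟩ hx
  refine ⟨?_, ?_⟩
  · rw [condProbWLt_of_le hs, ← unif_setOf_add_mul_lt hs hp1]
    rfl
  · simp_rw [Ystar_eq_pickedY, condProbYstarGt_of_mem ht]
    exact measure_lt_pickedY ht.1 ht.2 hp1

lemma lintegral_condProbYstarGt_mul_condProbWLt_le (hn : 2 ≤ n) (hp0 : 0 ≤ p) (hp1 : p < 1)
    (k : ℕ) (μ : Fin n → Measure ℝ) [∀ i, IsFiniteMeasure (μ i)] :
    (∫⁻ x, ENNReal.ofReal (condProbYstarGt k p (kthLargest x 1)) *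
        ENNReal.ofReal (condProbWLt p (kthLargest x 2)) ∂Measure.pi μ) * Measure.pi μ univ ≤
      (∫⁻ x, ENNReal.ofReal (condProbYstarGt k p (kthLargest x 1)) ∂Measure.pi μ) *
        ∫⁻ x, ENNReal.ofReal (condProbWLt p (kthLargest x 2)) ∂Measure.pi μ :=
  lintegral_mul_measure_le_pi_of_monotone_of_antitone μ
    ((monotone_condProbYstarGt hp1.le).comp (monotone_kthLargest_one (by omega)))
    ((antitone_condProbWLt hp1).comp_monotone (monotone_kthLargest_two hn))
    (measurable_condProbYstarGt.comp (measurable_kthLargest_one (by omega)))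
    (measurable_condProbWLt.comp (measurable_kthLargest_two hn))
    (fun _ => condProbYstarGt_nonneg hp1.le _) (fun _ => condProbWLt_nonneg hp1 _)
    (fun _ => condProbYstarGt_le hp0 hp1.le _) (fun _ => condProbWLt_le_one hp1 _)

end Conditioning

theorem stmt12_general (n m : ℕ) (hn : 2 ≤ n) :
    ∀ p ∈ Set.Ioo (0 : ℝ) 1,
      P₁₂ n m {ω : (Fin n → ℝ) × ℝ × (Fin (m - 1) → ℝ) × ℝ |
          p < Ystar ω.1 ω.2.2.1 ω.2.2.2 ∧ kthLargest ω.1 1 < p ∧ Wvar 2 ω.1 ω.2.1 < p} *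
      P₁₂ n m {ω : (Fin n → ℝ) × ℝ × (Fin (m - 1) → ℝ) × ℝ | kthLargest ω.1 1 < p} ≤
      P₁₂ n m {ω : (Fin n → ℝ) × ℝ × (Fin (m - 1) → ℝ) × ℝ |
          p < Ystar ω.1 ω.2.2.1 ω.2.2.2 ∧ kthLargest ω.1 1 < p} *
      P₁₂ n m {ω : (Fin n → ℝ) × ℝ × (Fin (m - 1) → ℝ) × ℝ |
          kthLargest ω.1 1 < p ∧ Wvar 2 ω.1 ω.2.1 < p} := by
  rintro p ⟨hp0, hp1⟩
  have hn0 : 0 < n := by omega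
  set W : (Fin n → ℝ) → Set ℝ := fun x => {u | Wvar 2 x u < p}
  set Y : (Fin n → ℝ) → Set ((Fin (m - 1) → ℝ) × ℝ) := fun x => {yv | p < Ystar x yv.1 yv.2}
  have hW : MeasurableSet {q : (Fin n → ℝ) × ℝ | q.2 ∈ W q.1} := measurableSet_Wvar_lt hn p
  have hY : MeasurableSet {q : (Fin n → ℝ) × (Fin (m - 1) → ℝ) × ℝ | q.2 ∈ Y q.1} :=
    measurableSet_lt_Ystar hn0 hp0.le
  have E1 := P₁₂_setOf_eq_lintegral hn0 m p hW hY
  have E2 := P₁₂_setOf_eq_lintegral hn0 m p (B := fun _ => univ) (C := fun _ => univ) (by simp)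
    (by simp)
  have E3 := P₁₂_setOf_eq_lintegral hn0 m p (B := fun _ => univ) (by simp) hY
  have E4 := P₁₂_setOf_eq_lintegral hn0 m p (C := fun _ => univ) hW (by simp)
  simp only [W, Y, mem_ofPred_eq, mem_univ, true_and, and_true, measure_univ, one_mul, mul_one]
    at E1 E2 E3 E4
  rw [E1, E2, E3, E4]
  have hsec := ae_unif_Wvar_lt_and_measure_lt_Ystar (n := n) hp0.le hp1 (m - 1)
  rw [lintegral_one, lintegral_congr_ae (hsec.mono fun x hx => by rw [hx.1, hx.2, mul_comm]),
    lintegral_congr_ae (hsec.mono fun x hx => hx.2),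
    lintegral_congr_ae (hsec.mono fun x hx => hx.1)]
  exact lintegral_condProbYstarGt_mul_condProbWLt_le hn hp0.le hp1 _ _

/-- For integers `n ≥ 2`, `m ≥ 2` and `p ∈ (0,1)`:
`Pr[Y* > p ∧ X_{(1),n} < p ∧ W_{2,n} < p] · Pr[X_{(1),n} < p]
  ≤ Pr[Y* > p ∧ X_{(1),n} < p] · Pr[X_{(1),n} < p ∧ W_{2,n} < p]`, i.e.
`Pr[Y* > p | X_{(1),n} < p ∧ W_{2,n} < p] ≤ Pr[Y* > p | X_{(1),n} < p]`. -/
theorem stmt12 (n m : ℕ) (hn : 2 ≤ n) (hm : 2 ≤ m) :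
    ∀ p ∈ Set.Ioo (0 : ℝ) 1,
      P₁₂ n m {ω : (Fin n → ℝ) × ℝ × (Fin (m - 1) → ℝ) × ℝ |
          p < Ystar ω.1 ω.2.2.1 ω.2.2.2 ∧ kthLargest ω.1 1 < p ∧ Wvar 2 ω.1 ω.2.1 < p} *
      P₁₂ n m {ω : (Fin n → ℝ) × ℝ × (Fin (m - 1) → ℝ) × ℝ | kthLargest ω.1 1 < p} ≤
      P₁₂ n m {ω : (Fin n → ℝ) × ℝ × (Fin (m - 1) → ℝ) × ℝ |
          p < Ystar ω.1 ω.2.2.1 ω.2.2.2 ∧ kthLargest ω.1 1 < p} *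
      P₁₂ n m {ω : (Fin n → ℝ) × ℝ × (Fin (m - 1) → ℝ) × ℝ |
          kthLargest ω.1 1 < p ∧ Wvar 2 ω.1 ω.2.1 < p} :=
  stmt12_general n m hn
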